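/- arXiv:1712.08102 — 3 statements merged into one kernel-verified Lean document; each statement's English description precedes it below -/
import Mathlib

section
/- Let δ ∈ ℝ^p satisfy ‖δ_{T^c}‖₁ ≤ u‖δ_T‖₁ for a set T with |T| = s, and let T₁ be the indices of the m largest components of δ in absolute value. Then ‖δ‖₂ ≤ ‖δ_{T₁}‖₂ + (1+u)√(s/m) ‖δ_T‖₂ ≤ {1 + (1+u)√(s/m)} ‖δ_{T₁}‖₂. -/
/-!
Every coordinate outside `T₁` is at most the average `‖δ_{T₁}‖₁ / m` in absolute value, so
`m ‖δ_{T₁ᶜ}‖₂² ≤ ‖δ_{T₁ᶜ}‖₁ ‖δ_{T₁}‖₁ ≤ ‖δ‖₁²`, while the cone condition and Cauchy–Schwarz give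
`‖δ‖₁ ≤ (1 + u) ‖δ_T‖₁ ≤ (1 + u) √s ‖δ_T‖₂`; the triangle inequality for `√` finishes the first
bound. For the second, `T₁` holds the `m ≥ s` largest coordinates, so `‖δ_T‖₂ ≤ ‖δ_{T₁}‖₂`.
-/

open Finset

theorem Real.sqrt_add_le_add_sqrt {a b : ℝ} (ha : 0 ≤ a) (hb : 0 ≤ b) :
    √(a + b) ≤ √a + √b := by
  rw [Real.sqrt_le_iff]
  refine ⟨by positivity, ?_⟩
  nlinarith [Real.sq_sqrt ha, Real.sq_sqrt hb, Real.sqrt_nonneg a, Real.sqrt_nonneg b]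

namespace Finset

variable {ι : Type*}

theorem card_mul_sum_le_card_mul_sum_of_forall_le (g : ι → ℝ) (A B : Finset ι)
    (h : ∀ j ∈ A, ∀ i ∈ B, g j ≤ g i) :
    #B * ∑ j ∈ A, g j ≤ #A * ∑ i ∈ B, g i := by
  calc (#B : ℝ) * ∑ j ∈ A, g j = ∑ j ∈ A, ∑ _i ∈ B, g j := by
        simp [mul_sum]
    _ ≤ ∑ _j ∈ A, ∑ i ∈ B, g i := sum_le_sum fun j hj => sum_le_sum fun i hi => h j hj i hi
    _ = #A * ∑ i ∈ B, g i := by simp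

theorem sum_le_sum_of_card_le_of_forall_le {g : ι → ℝ} (hg : ∀ i, 0 ≤ g i) {T S : Finset ι}
    (hcard : #T ≤ #S) (hS : ∀ i ∈ S, ∀ j ∉ S, g j ≤ g i) :
    ∑ i ∈ T, g i ≤ ∑ i ∈ S, g i := by
  classical
  rw [← sum_inter_add_sum_sdiff T S, ← sum_inter_add_sum_sdiff S T, inter_comm]
  suffices ∑ j ∈ T \ S, g j ≤ ∑ i ∈ S \ T, g i by linarith
  have hcard_sdiff : #(T \ S) ≤ #(S \ T) := card_sdiff_le_card_sdiff_iff.mpr hcard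
  rcases (#(S \ T)).eq_zero_or_pos with h0 | hpos
  · rw [card_eq_zero.mp (by omega : #(T \ S) = 0), sum_empty]
    exact sum_nonneg fun i _ => hg i
  have hmul := card_mul_sum_le_card_mul_sum_of_forall_le g (T \ S) (S \ T)
    fun j hj i hi => hS i (mem_sdiff.mp hi).1 j (mem_sdiff.mp hj).2
  have hB : 0 ≤ ∑ i ∈ S \ T, g i := sum_nonneg fun i _ => hg i
  have hcardR : (#(T \ S) : ℝ) ≤ #(S \ T) := by exact_mod_cast hcard_sdiff
  refine le_of_mul_le_mul_left (hmul.trans ?_) (by exact_mod_cast hpos : (0 : ℝ) < #(S \ T))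
  exact mul_le_mul_of_nonneg_right hcardR hB

variable [Fintype ι] [DecidableEq ι]

theorem card_mul_sum_sq_compl_le_sq_sum_abs (f : ι → ℝ) (S : Finset ι)
    (hS : ∀ i ∈ S, ∀ j ∉ S, |f j| ≤ |f i|) :
    #S * ∑ j ∈ Sᶜ, f j ^ 2 ≤ (∑ i, |f i|) ^ 2 := by
  have hhead : ∀ j ∈ Sᶜ, #S * |f j| ≤ ∑ i ∈ S, |f i| := fun j hj => by
    simpa using card_nsmul_le_sum S (fun i => |f i|) _ fun i hi => hS i hi j (mem_compl.mp hj)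
  have hS0 : 0 ≤ ∑ i ∈ S, |f i| := sum_nonneg fun i _ => abs_nonneg _
  have hSc0 : 0 ≤ ∑ j ∈ Sᶜ, |f j| := sum_nonneg fun i _ => abs_nonneg _
  calc (#S : ℝ) * ∑ j ∈ Sᶜ, f j ^ 2 = ∑ j ∈ Sᶜ, |f j| * (#S * |f j|) := by
        rw [mul_sum]; refine sum_congr rfl fun j _ => ?_; rw [← sq_abs]; ring
    _ ≤ ∑ j ∈ Sᶜ, |f j| * ∑ i ∈ S, |f i| :=
        sum_le_sum fun j hj => mul_le_mul_of_nonneg_left (hhead j hj) (abs_nonneg _)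
    _ = (∑ j ∈ Sᶜ, |f j|) * ∑ i ∈ S, |f i| := by rw [sum_mul]
    _ ≤ (∑ i, |f i|) ^ 2 := by
        rw [← sum_add_sum_compl S]; nlinarith

theorem sq_sum_abs_le_of_cone (f : ι → ℝ) (T : Finset ι) {u : ℝ}
    (hcone : ∑ i ∈ Tᶜ, |f i| ≤ u * ∑ i ∈ T, |f i|) :
    (∑ i, |f i|) ^ 2 ≤ (1 + u) ^ 2 * (#T * ∑ i ∈ T, f i ^ 2) := by
  have hl1 : ∑ i, |f i| ≤ (1 + u) * ∑ i ∈ T, |f i| := by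
    rw [← sum_add_sum_compl T]; linarith
  have hCS : (∑ i ∈ T, |f i|) ^ 2 ≤ #T * ∑ i ∈ T, f i ^ 2 := by
    simpa only [sq_abs] using sq_sum_le_card_mul_sum_sq (s := T) (f := fun i => |f i|)
  calc (∑ i, |f i|) ^ 2 ≤ ((1 + u) * ∑ i ∈ T, |f i|) ^ 2 :=
        pow_le_pow_left₀ (sum_nonneg fun i _ => abs_nonneg _) hl1 2
    _ = (1 + u) ^ 2 * (∑ i ∈ T, |f i|) ^ 2 := by ring
    _ ≤ (1 + u) ^ 2 * (#T * ∑ i ∈ T, f i ^ 2) := by gcongr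

end Finset

theorem l2_cone_largest_block_bound_general {p s m : ℕ}
    (hs : 0 < s) (hsm : s ≤ m) (u : ℝ) (hu : 0 < u)
    (δ : Fin p → ℝ) (T T₁ : Finset (Fin p))
    (hT : T.card = s)
    (hcone : ∑ i ∈ Tᶜ, |δ i| ≤ u * ∑ i ∈ T, |δ i|)
    (hT₁card : T₁.card = m)
    (hT₁ : ∀ i ∈ T₁, ∀ j ∉ T₁, |δ j| ≤ |δ i|) :
    Real.sqrt (∑ i, (δ i) ^ 2) ≤
      Real.sqrt (∑ i ∈ T₁, (δ i) ^ 2) +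
        (1 + u) * Real.sqrt ((s : ℝ) / m) * Real.sqrt (∑ i ∈ T, (δ i) ^ 2) ∧
    Real.sqrt (∑ i ∈ T₁, (δ i) ^ 2) +
        (1 + u) * Real.sqrt ((s : ℝ) / m) * Real.sqrt (∑ i ∈ T, (δ i) ^ 2) ≤
      (1 + (1 + u) * Real.sqrt ((s : ℝ) / m)) *
        Real.sqrt (∑ i ∈ T₁, (δ i) ^ 2) := by
  have hm : (0 : ℝ) < m := by exact_mod_cast hs.trans_le hsm
  have htail : ∑ i ∈ T₁ᶜ, δ i ^ 2 ≤ ((1 + u) * √(s / m)) ^ 2 * ∑ i ∈ T, δ i ^ 2 := by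
    have h := (card_mul_sum_sq_compl_le_sq_sum_abs δ T₁ hT₁).trans
      (sq_sum_abs_le_of_cone δ T hcone)
    rw [hT, hT₁card, ← le_div_iff₀' hm] at h
    rw [mul_pow, Real.sq_sqrt (by positivity)]
    exact h.trans_eq (by ring)
  have hTT₁ : ∑ i ∈ T, δ i ^ 2 ≤ ∑ i ∈ T₁, δ i ^ 2 :=
    sum_le_sum_of_card_le_of_forall_le (fun i => sq_nonneg _) (hT ▸ hT₁card ▸ hsm)
      fun i hi j hj => sq_le_sq.mpr (hT₁ i hi j hj)
  constructor
  · calc √(∑ i, δ i ^ 2) = √(∑ i ∈ T₁, δ i ^ 2 + ∑ i ∈ T₁ᶜ, δ i ^ 2) := by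
          rw [sum_add_sum_compl]
      _ ≤ √(∑ i ∈ T₁, δ i ^ 2) + √(∑ i ∈ T₁ᶜ, δ i ^ 2) :=
          Real.sqrt_add_le_add_sqrt (by positivity) (by positivity)
      _ ≤ _ := by
          grw [htail, Real.sqrt_mul' _ (by positivity), Real.sqrt_sq (by positivity)]
  · rw [one_add_mul _ (√(∑ i ∈ T₁, δ i ^ 2))]
    gcongr

/-- If `δ` lies in the cone `C_T(u)` with `|T| = s` and `T₁` collects the `m`
largest-magnitude coordinates of `δ`, then
`‖δ‖₂ ≤ ‖δ_{T₁}‖₂ + (1+u)√(s/m)‖δ_T‖₂ ≤ {1+(1+u)√(s/m)}‖δ_{T₁}‖₂`. -/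
theorem l2_cone_largest_block_bound {p s m : ℕ}
    (hs : 0 < s) (hsm : s ≤ m) (hmp : m ≤ p) (u : ℝ) (hu : 0 < u)
    (δ : Fin p → ℝ) (T T₁ : Finset (Fin p))
    (hT : T.card = s)
    (hcone : ∑ i ∈ Tᶜ, |δ i| ≤ u * ∑ i ∈ T, |δ i|)
    (hT₁card : T₁.card = m)
    (hT₁ : ∀ i ∈ T₁, ∀ j ∉ T₁, |δ j| ≤ |δ i|) :
    Real.sqrt (∑ i, (δ i) ^ 2) ≤
      Real.sqrt (∑ i ∈ T₁, (δ i) ^ 2) +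
        (1 + u) * Real.sqrt ((s : ℝ) / m) * Real.sqrt (∑ i ∈ T, (δ i) ^ 2) ∧
    Real.sqrt (∑ i ∈ T₁, (δ i) ^ 2) +
        (1 + u) * Real.sqrt ((s : ℝ) / m) * Real.sqrt (∑ i ∈ T, (δ i) ^ 2) ≤
      (1 + (1 + u) * Real.sqrt ((s : ℝ) / m)) *
        Real.sqrt (∑ i ∈ T₁, (δ i) ^ 2) :=
  l2_cone_largest_block_bound_general hs hsm u hu δ T T₁ hT hcone hT₁card hT₁
end

section
/- Fix data and suppose: (i) (β₀, t(β₀)) is feasible for the optimization problem min ‖β‖₁ + λ_t‖t‖_∞ subject to |(1/n)Σ z_{iℓ}(y_i − x_i'β)| ≤ τ t_ℓ and {(1/n)Σ z_{iℓ}²(y_i − x_i'β)²}^{1/2} ≤ t_ℓ for all ℓ, (ii) (β̂, t̂) is an optimal solution, (iii) |t_ℓ(β̂) − t_ℓ(β₀)| ≤ H_n‖β̂ − β₀‖₁ for all ℓ, and (iv) λ_t = 1/(2H_n). Then β̂ − β₀ lies in the cone: ‖β̂_{T^c}‖₁ ≤ 3‖(β₀ − β̂)_T‖₁, where T = support(β₀).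 -/
/-!
Feasibility of `β̂` gives `t(β̂) ≤ t̂` coordinatewise, and the Lipschitz bound gives
`t(β₀) ≤ t(β̂) + H_n ‖β̂ - β₀‖₁`; taking maxima and inserting both into the optimality inequality
yields the basic inequality `‖β̂‖₁ ≤ ‖β₀‖₁ + λ_t H_n ‖β̂ - β₀‖₁ = ‖β₀‖₁ + ½ ‖β̂ - β₀‖₁`.
Splitting the `ℓ₁` norms along `T` and `Tᶜ`, where `β₀` vanishes, turns it into the cone condition.
-/

open Finset

theorem iSup_le_iSup_add_of_forall_le_add {ι : Type*} [Finite ι] {f g : ι → ℝ} {c : ℝ}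
    (hg : ∀ i, 0 ≤ g i) (hc : 0 ≤ c) (hfg : ∀ i, f i ≤ g i + c) :
    ⨆ i, f i ≤ (⨆ i, g i) + c :=
  Real.iSup_le
    (fun i => (hfg i).trans (add_le_add_left (le_ciSup (Set.finite_range g).bddAbove i) c))
    (add_nonneg (Real.iSup_nonneg hg) hc)

theorem le_add_mul_of_add_mul_iSup_le {ι : Type*} [Finite ι] {s s₀ t : ι → ℝ} {a b lam c : ℝ}
    (hs : ∀ i, 0 ≤ s i) (hst : ∀ i, s i ≤ t i) (hss₀ : ∀ i, |s i - s₀ i| ≤ c)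
    (hlam : 0 ≤ lam) (hc : 0 ≤ c)
    (hopt : a + lam * ⨆ i, t i ≤ b + lam * ⨆ i, s₀ i) :
    a ≤ b + lam * c := by
  have hst_sup : ⨆ i, s i ≤ ⨆ i, t i :=
    ciSup_mono (Set.finite_range t).bddAbove hst
  have hs₀_sup : ⨆ i, s₀ i ≤ (⨆ i, s i) + c :=
    iSup_le_iSup_add_of_forall_le_add hs hc fun i => by
      linarith [(abs_sub_le_iff.mp (hss₀ i)).2]
  have hpenalty : lam * ⨆ i, s₀ i ≤ lam * (⨆ i, t i) + lam * c := by
    rw [← mul_add]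
    exact mul_le_mul_of_nonneg_left (by linarith) hlam
  linarith

theorem one_sub_mul_sum_compl_abs_le {ι : Type*} [Fintype ι] [DecidableEq ι] {β β₀ : ι → ℝ}
    {T : Finset ι} {c : ℝ} (hβ₀ : ∀ l ∉ T, β₀ l = 0)
    (hbasic : ∑ l, |β l| ≤ ∑ l, |β₀ l| + c * ∑ l, |β l - β₀ l|) :
    (1 - c) * ∑ l ∈ Tᶜ, |β l| ≤ (1 + c) * ∑ l ∈ T, |β₀ l - β l| := by
  have hβ₀_compl : ∀ l ∈ Tᶜ, β₀ l = 0 := fun l hl => hβ₀ l (mem_compl.mp hl)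
  have h₀ : ∑ l ∈ Tᶜ, |β₀ l| = 0 :=
    sum_eq_zero fun l hl => by rw [hβ₀_compl l hl, abs_zero]
  have hdiff_compl : ∑ l ∈ Tᶜ, |β l - β₀ l| = ∑ l ∈ Tᶜ, |β l| :=
    sum_congr rfl fun l hl => by rw [hβ₀_compl l hl, sub_zero]
  have hdiff_T : ∑ l ∈ T, |β l - β₀ l| = ∑ l ∈ T, |β₀ l - β l| :=
    sum_congr rfl fun l _ => abs_sub_comm _ _
  have htriangle : ∑ l ∈ T, |β₀ l| ≤ ∑ l ∈ T, |β l| + ∑ l ∈ T, |β₀ l - β l| := by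
    rw [← sum_add_distrib]
    exact sum_le_sum fun l _ => by linarith [abs_sub_abs_le_abs_sub (β₀ l) (β l)]
  rw [← sum_add_sum_compl T, ← sum_add_sum_compl T (fun l => |β₀ l|),
    ← sum_add_sum_compl T (fun l => |β l - β₀ l|), h₀, hdiff_compl, hdiff_T] at hbasic
  linarith

theorem pivotal_cone_membership_general {n K p : ℕ}
    (y : Fin n → ℝ) (x : Fin n → Fin p → ℝ) (z : Fin n → Fin K → ℝ)
    (βh β0 : Fin p → ℝ) (th : Fin K → ℝ) (lam Hn : ℝ)
    (hHn : 0 < Hn) (hlam : lam = 1 / (2 * Hn))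
    -- feasibility of (β̂, t̂) in the second-moment constraints:
    (hfeash : ∀ ℓ : Fin K,
      Real.sqrt ((1 / n : ℝ) * ∑ i, (z i ℓ) ^ 2 * (y i - ∑ l, x i l * βh l) ^ 2) ≤ th ℓ)
    -- optimality of (β̂, t̂):
    (hopt : (∑ l, |βh l|) + lam * (⨆ ℓ : Fin K, th ℓ) ≤
      (∑ l, |β0 l|) + lam * ⨆ ℓ : Fin K,
        Real.sqrt ((1 / n : ℝ) * ∑ i, (z i ℓ) ^ 2 * (y i - ∑ l, x i l * β0 l) ^ 2))
    -- Lipschitz bound: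
    (hlip : ∀ ℓ : Fin K,
      |Real.sqrt ((1 / n : ℝ) * ∑ i, (z i ℓ) ^ 2 * (y i - ∑ l, x i l * βh l) ^ 2) -
          Real.sqrt ((1 / n : ℝ) * ∑ i, (z i ℓ) ^ 2 * (y i - ∑ l, x i l * β0 l) ^ 2)| ≤
        Hn * ∑ l, |βh l - β0 l|) :
    ∑ l ∈ (Finset.univ.filter fun l => β0 l ≠ 0)ᶜ, |βh l| ≤
      3 * ∑ l ∈ Finset.univ.filter fun l => β0 l ≠ 0, |β0 l - βh l| := by
  have hbasic : ∑ l, |βh l| ≤ ∑ l, |β0 l| + lam * (Hn * ∑ l, |βh l - β0 l|) :=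
    le_add_mul_of_add_mul_iSup_le (fun _ => Real.sqrt_nonneg _) hfeash hlip
      (by rw [hlam]; positivity) (by positivity) hopt
  have hhalf : lam * Hn = 1 / 2 := by rw [hlam]; field_simp
  rw [← mul_assoc, hhalf] at hbasic
  have hcone := one_sub_mul_sum_compl_abs_le
    (T := Finset.univ.filter fun l => β0 l ≠ 0) (by simp) hbasic
  linarith

/-- Cone membership of the pivotal estimator's error: under feasibility of `β₀`,
optimality of `(β̂, t̂)`, the Lipschitz bound on `t`, and `lam = 1/(2H_n)`, the
error lies in the cone `‖β̂_{T^c}‖₁ ≤ 3‖(β₀−β̂)_T‖₁` with `T = support(β₀)`. -/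
theorem pivotal_cone_membership {n K p : ℕ} (hn : 0 < n) (hK : 0 < K)
    (y : Fin n → ℝ) (x : Fin n → Fin p → ℝ) (z : Fin n → Fin K → ℝ)
    (βh β0 : Fin p → ℝ) (th : Fin K → ℝ) (τ lam Hn : ℝ)
    (hHn : 0 < Hn) (hlam : lam = 1 / (2 * Hn)) (hτ : 0 ≤ τ)
    -- feasibility of (β₀, t(β₀)):
    (hfeas0 : ∀ ℓ : Fin K,
      |(1 / n : ℝ) * ∑ i, z i ℓ * (y i - ∑ l, x i l * β0 l)| ≤
        τ * Real.sqrt ((1 / n : ℝ) * ∑ i, (z i ℓ) ^ 2 * (y i - ∑ l, x i l * β0 l) ^ 2))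
    -- feasibility of (β̂, t̂) in the second-moment constraints:
    (hfeash : ∀ ℓ : Fin K,
      Real.sqrt ((1 / n : ℝ) * ∑ i, (z i ℓ) ^ 2 * (y i - ∑ l, x i l * βh l) ^ 2) ≤ th ℓ)
    -- optimality of (β̂, t̂):
    (hopt : (∑ l, |βh l|) + lam * (⨆ ℓ : Fin K, th ℓ) ≤
      (∑ l, |β0 l|) + lam * ⨆ ℓ : Fin K,
        Real.sqrt ((1 / n : ℝ) * ∑ i, (z i ℓ) ^ 2 * (y i - ∑ l, x i l * β0 l) ^ 2))
    -- Lipschitz bound: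
    (hlip : ∀ ℓ : Fin K,
      |Real.sqrt ((1 / n : ℝ) * ∑ i, (z i ℓ) ^ 2 * (y i - ∑ l, x i l * βh l) ^ 2) -
          Real.sqrt ((1 / n : ℝ) * ∑ i, (z i ℓ) ^ 2 * (y i - ∑ l, x i l * β0 l) ^ 2)| ≤
        Hn * ∑ l, |βh l - β0 l|) :
    ∑ l ∈ (Finset.univ.filter fun l => β0 l ≠ 0)ᶜ, |βh l| ≤
      3 * ∑ l ∈ Finset.univ.filter fun l => β0 l ≠ 0, |β0 l - βh l| :=
  pivotal_cone_membership_general y x z βh β0 th lam Hn hHn hlam hfeash hopt hlip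
end

section
/- Under the feasibility and optimality hypotheses of the pivotal estimator: if β₀ is feasible, (β̂, t̂) optimal with ‖β̂‖₁ + λ_t‖t̂‖_∞ ≤ ‖β₀‖₁ + λ_t‖t(β₀)‖_∞, the Lipschitz bound ‖t(β̂)‖_∞ ≤ ‖t(β₀)‖_∞ + (1/λ_t)‖β̂−β₀‖₁ holds, and κ₁ = κ₁^{ZX}(s,3) > 0 satisfies τ ≤ λ_t κ₁/2, then ‖(1/n)Z'X(β̂ − β₀)‖_∞ ≤ 4τ‖t(β₀)‖_∞, and consequently for q ∈ {1,2}, ‖β̂ − β₀‖_q ≤ 4τ‖t(β₀)‖_∞ / κ_q^{ZX}(s,3). -/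
/-- Rate bound for the pivotal estimator: under feasibility of `β̂` and `β₀`,
the optimality-implied bound `‖t̂‖_∞ ≤ ‖t(β₀)‖_∞ + (1/lam)‖β̂−β₀‖₁`, the
sensitivity bounds `κ₁‖δ‖₁ ≤ ‖Ψδ‖_∞` and `κ_q‖δ‖_q ≤ ‖Ψδ‖_∞` for the error
`δ = β̂ − β₀` lying in the cone, and `τ ≤ lam κ₁/2`, we get
`‖(1/n)Z'X(β̂−β₀)‖_∞ ≤ 4τ‖t(β₀)‖_∞` and `‖β̂−β₀‖_q ≤ 4τ‖t(β₀)‖_∞/κ_q`. -/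
theorem pivotal_rate_bound {n K p : ℕ} (hK : 0 < K)
    (y : Fin n → ℝ) (x : Fin n → Fin p → ℝ) (z : Fin n → Fin K → ℝ)
    (βh β0 : Fin p → ℝ) (τ lam κ1 κq T0 Th q : ℝ)
    (hq : q = 1 ∨ q = 2)
    (hτ0 : 0 ≤ τ) (hlam : 0 < lam) (hκ1 : 0 < κ1) (hκq : 0 < κq) (hT0 : 0 ≤ T0)
    -- feasibility of β̂ : ‖(1/n)Z'(Y−Xβ̂)‖_∞ ≤ τ‖t̂‖_∞
    (hfeash : ∀ ℓ : Fin K,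
      |(1 / n : ℝ) * ∑ i, z i ℓ * (y i - ∑ l, x i l * βh l)| ≤ τ * Th)
    -- feasibility of β₀ : ‖(1/n)Z'(Y−Xβ₀)‖_∞ ≤ τ‖t(β₀)‖_∞
    (hfeas0 : ∀ ℓ : Fin K,
      |(1 / n : ℝ) * ∑ i, z i ℓ * (y i - ∑ l, x i l * β0 l)| ≤ τ * T0)
    -- optimality-implied bound on ‖t̂‖_∞
    (hTh : Th ≤ T0 + (1 / lam) * ∑ l, |βh l - β0 l|)
    -- ℓ₁-sensitivity applied to the cone element β̂ − β₀
    (hκ1sens : κ1 * ∑ l, |βh l - β0 l| ≤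
      ⨆ ℓ : Fin K, |(1 / n : ℝ) * ∑ i, z i ℓ * ∑ l, x i l * (βh l - β0 l)|)
    -- ℓ_q-sensitivity applied to the cone element β̂ − β₀
    (hκqsens : κq * (∑ l, |βh l - β0 l| ^ q) ^ (1 / q) ≤
      ⨆ ℓ : Fin K, |(1 / n : ℝ) * ∑ i, z i ℓ * ∑ l, x i l * (βh l - β0 l)|)
    (hτκ : τ ≤ lam * κ1 / 2) :
    (⨆ ℓ : Fin K, |(1 / n : ℝ) * ∑ i, z i ℓ * ∑ l, x i l * (βh l - β0 l)|) ≤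
        4 * τ * T0 ∧
    (∑ l, |βh l - β0 l| ^ q) ^ (1 / q) ≤ 4 * τ * T0 / κq := by

  haveI : Nonempty (Fin K) := Fin.pos_iff_nonempty.mp hK
  set L := ∑ l, |βh l - β0 l| with hLdef
  have hL0 : 0 ≤ L := Finset.sum_nonneg fun _ _ => abs_nonneg _
  have key : ∀ ℓ : Fin K,
      |(1 / n : ℝ) * ∑ i, z i ℓ * ∑ l, x i l * (βh l - β0 l)| ≤ τ * T0 + τ * Th := by
    intro ℓ
    have hid : (1 / n : ℝ) * ∑ i, z i ℓ * ∑ l, x i l * (βh l - β0 l)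
        = (1 / n : ℝ) * ∑ i, z i ℓ * (y i - ∑ l, x i l * β0 l)
          - (1 / n : ℝ) * ∑ i, z i ℓ * (y i - ∑ l, x i l * βh l) := by
      rw [← mul_sub, ← Finset.sum_sub_distrib]
      congr 1
      apply Finset.sum_congr rfl
      intro i _
      have hsum : ∑ l, x i l * (βh l - β0 l)
          = (∑ l, x i l * βh l) - ∑ l, x i l * β0 l := by
        rw [← Finset.sum_sub_distrib]
        exact Finset.sum_congr rfl fun l _ => by ring
      rw [hsum]; ring
    rw [hid]
    calc |(1 / n : ℝ) * (∑ i, z i ℓ * (y i - ∑ l, x i l * β0 l))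
            - (1 / n : ℝ) * ∑ i, z i ℓ * (y i - ∑ l, x i l * βh l)|
        ≤ |(1 / n : ℝ) * ∑ i, z i ℓ * (y i - ∑ l, x i l * β0 l)|
          + |(1 / n : ℝ) * ∑ i, z i ℓ * (y i - ∑ l, x i l * βh l)| := abs_sub _ _
      _ ≤ τ * T0 + τ * Th := add_le_add (hfeas0 ℓ) (hfeash ℓ)
  set S := ⨆ ℓ : Fin K, |(1 / n : ℝ) * ∑ i, z i ℓ * ∑ l, x i l * (βh l - β0 l)| with hSdef
  have hSle : S ≤ τ * T0 + τ * Th := ciSup_le key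
  have hτTh : τ * Th ≤ τ * (T0 + (1 / lam) * L) :=
    mul_le_mul_of_nonneg_left hTh hτ0
  have hS1 : S ≤ 2 * τ * T0 + (τ / lam) * L := by
    have : τ * (T0 + (1 / lam) * L) = τ * T0 + (τ / lam) * L := by
      field_simp
    linarith
  have hrat : τ / lam ≤ κ1 / 2 := by
    rw [div_le_iff₀ hlam]
    calc τ ≤ lam * κ1 / 2 := hτκ
      _ = κ1 / 2 * lam := by ring
  have hratL : (τ / lam) * L ≤ (κ1 / 2) * L :=
    mul_le_mul_of_nonneg_right hrat hL0
  have hκ1L : κ1 * L ≤ 4 * τ * T0 := by nlinarith [hκ1sens, hS1]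
  have hS4 : S ≤ 4 * τ * T0 := by nlinarith
  refine ⟨hS4, ?_⟩
  rw [le_div_iff₀ hκq]
  calc (∑ l, |βh l - β0 l| ^ q) ^ (1 / q) * κq
      = κq * (∑ l, |βh l - β0 l| ^ q) ^ (1 / q) := mul_comm _ _
    _ ≤ S := hκqsens
    _ ≤ 4 * τ * T0 := hS4
end
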